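/- arXiv:1409.7890 — 2 statements merged into one kernel-verified Lean document; each statement's English description precedes it below -/
import Mathlib

section
/- Let P be a convex polytope in R^n, let y be an interior point of P, and let f: P → P be continuous with y not in the image of f. Define g: P → ∂P by letting g(x) be the unique point where the ray from f(x) through y meets the boundary of P. Then g is continuous, and any fixed point x₀ of g lies in a proper face F of P with f(x₀) ∉ F. -/
/-- `F` is a face of the convex set `P`: either `P` itself, or the intersection of
`P` with a supporting hyperplane. -/
def IsFaceOf {E : Type*} [NormedAddCommGroup E] [NormedSpace ℝ E] (F P : Set E) : Prop :=
  F = P ∨ ∃ (l : E →L[ℝ] ℝ) (c : ℝ), (∀ x ∈ P, l x ≤ c) ∧ F = {x ∈ P | l x = c}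

/-!
Move the interior point `y` to the origin and let `p` be the gauge of the translated body. The
ray from `a` through `y` leaves `P` at `y + (p (y - a))⁻¹ • (y - a)`; since the ray does leave
`P`, `p (y - a) ≠ 0`, and continuity of `p` makes the exit point continuous in `a`.
A fixed point `x₀ = g x₀` is a boundary point, so a supporting functional `l ≤ l x₀` on `P`
with `l y < l x₀` cuts out a proper face through `x₀`; since `x₀` lies beyond `y` on the ray
from `f x₀`, `l (f x₀) < l x₀`.
-/

open Set Topology
open scoped Pointwise

theorem frontier_vadd {α G : Type*} [TopologicalSpace α] [AddGroup G] [AddAction G α]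
    [ContinuousConstVAdd G α] (c : G) (s : Set α) : frontier (c +ᵥ s) = c +ᵥ frontier s :=
  ((Homeomorph.vadd c).image_frontier s).symm

section RayToFrontier

variable {E : Type*} [NormedAddCommGroup E] [NormedSpace ℝ E] {s : Set E} {y : E}

omit [NormedSpace ℝ E] in
lemma neg_vadd_mem_nhds_zero (hy : y ∈ interior s) : -y +ᵥ s ∈ 𝓝 0 := by
  rw [← mem_interior_iff_mem_nhds, interior_vadd, mem_vadd_set_iff_neg_vadd_mem]
  simpa using hy

lemma gauge_neg_vadd_sub_eq_one_iff (hs : Convex ℝ s) (hy : y ∈ interior s) (z : E) :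
    gauge (-y +ᵥ s) (z - y) = 1 ↔ z ∈ frontier s := by
  rw [gauge_eq_one_iff_mem_frontier (hs.vadd _) (neg_vadd_mem_nhds_zero hy), frontier_vadd,
    mem_vadd_set_iff_neg_vadd_mem]
  simp

variable {a : E} {t : ℝ}

lemma sub_one_mul_gauge_eq_one (hs : Convex ℝ s) (hy : y ∈ interior s) (ht : 1 ≤ t)
    (hfr : a + t • (y - a) ∈ frontier s) : (t - 1) * gauge (-y +ᵥ s) (y - a) = 1 := by
  rw [← gauge_neg_vadd_sub_eq_one_iff hs hy] at hfr
  rwa [show a + t • (y - a) - y = (t - 1) • (y - a) by module,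
    gauge_smul_of_nonneg (sub_nonneg.2 ht), smul_eq_mul] at hfr

lemma add_smul_sub_eq_add_inv_gauge_smul (hs : Convex ℝ s) (hy : y ∈ interior s) (ht : 1 ≤ t)
    (hfr : a + t • (y - a) ∈ frontier s) :
    a + t • (y - a) = y + (gauge (-y +ᵥ s) (y - a))⁻¹ • (y - a) := by
  rw [← eq_inv_of_mul_eq_one_left (sub_one_mul_gauge_eq_one hs hy ht hfr)]
  module

lemma continuous_of_mem_frontier_of_eq_add_smul_sub (hs : Convex ℝ s) (hy : y ∈ interior s)
    {X : Type*} [TopologicalSpace X] {φ g : X → E} (hφ : Continuous φ)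
    (hg : ∀ x, g x ∈ frontier s ∧ ∃ t : ℝ, 1 ≤ t ∧ g x = φ x + t • (y - φ x)) :
    Continuous g := by
  have hg_eq : ∀ x, g x = y + (gauge (-y +ᵥ s) (y - φ x))⁻¹ • (y - φ x) ∧
      gauge (-y +ᵥ s) (y - φ x) ≠ 0 := by
    intro x
    obtain ⟨hfr, t, ht, hgx⟩ := hg x
    rw [hgx] at hfr ⊢
    exact ⟨add_smul_sub_eq_add_inv_gauge_smul hs hy ht hfr,
      right_ne_zero_of_mul_eq_one (sub_one_mul_gauge_eq_one hs hy ht hfr)⟩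
  have hgauge : Continuous (gauge (-y +ᵥ s)) :=
    continuous_gauge (hs.vadd _) (neg_vadd_mem_nhds_zero hy)
  rw [show g = _ from funext fun x ↦ (hg_eq x).1]
  exact continuous_const.add (((hgauge.comp (continuous_const.sub hφ)).inv₀
    fun x ↦ (hg_eq x).2).smul (continuous_const.sub hφ))

end RayToFrontier

section SupportingFace

variable {E : Type*} [NormedAddCommGroup E] [NormedSpace ℝ E] {s : Set E} {x y : E}

lemma Convex.exists_lt_forall_le_of_notMem_interior (hs : Convex ℝ s) (hy : y ∈ interior s)
    (hx : x ∉ interior s) : ∃ l : E →L[ℝ] ℝ, l y < l x ∧ ∀ z ∈ s, l z ≤ l x := by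
  obtain ⟨l, hl⟩ := geometric_hahn_banach_open_point hs.interior isOpen_interior hx
  refine ⟨l, hl y hy, fun z hz ↦ ?_⟩
  have hs_sub : s ⊆ closure (interior s) := by
    rw [hs.closure_interior_eq_closure_of_nonempty_interior ⟨y, hy⟩]
    exact subset_closure
  exact closure_minimal (fun w hw ↦ (hl w hw).le) (isClosed_le l.continuous continuous_const)
    (hs_sub hz)

lemma Convex.exists_isFaceOf_ne_of_eq_add_smul_sub (hs : Convex ℝ s) (hy : y ∈ interior s)
    (hxs : x ∈ s) (hx : x ∉ interior s) {a : E} {t : ℝ} (ht : 1 ≤ t) (hxa : x = a + t • (y - a)) :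
    ∃ F, IsFaceOf F s ∧ F ≠ s ∧ x ∈ F ∧ a ∉ F := by
  obtain ⟨l, hlyx, hl⟩ := hs.exists_lt_forall_le_of_notMem_interior hy hx
  refine ⟨{z ∈ s | l z = l x}, Or.inr ⟨l, l x, hl, rfl⟩, fun h ↦ ?_, ⟨hxs, rfl⟩, fun ha ↦ ?_⟩
  · have hyF : y ∈ {z ∈ s | l z = l x} := by rw [h]; exact interior_subset hy
    exact hlyx.ne hyF.2
  · have hlx : l x = l a + t * (l y - l a) := by simp [hxa]
    rw [ha.2] at hlx
    nlinarith

theorem ray_retraction_fixed_point_general (n : ℕ)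
    (S : Finset (EuclideanSpace ℝ (Fin n)))
    (P : Set (EuclideanSpace ℝ (Fin n)))
    (hP : P = convexHull ℝ (S : Set (EuclideanSpace ℝ (Fin n))))
    (y : EuclideanSpace ℝ (Fin n)) (hy : y ∈ interior P)
    (f : C(P, P))
    (g : P → EuclideanSpace ℝ (Fin n))
    (hg : ∀ x : P, g x ∈ frontier P ∧
      ∃ t : ℝ, 1 ≤ t ∧ g x = (f x : EuclideanSpace ℝ (Fin n)) +
        t • (y - (f x : EuclideanSpace ℝ (Fin n)))) :
    Continuous g ∧
      ∀ x₀ : P, g x₀ = (x₀ : EuclideanSpace ℝ (Fin n)) →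
        ∃ F, IsFaceOf F P ∧ F ≠ P ∧ (x₀ : EuclideanSpace ℝ (Fin n)) ∈ F ∧
          (f x₀ : EuclideanSpace ℝ (Fin n)) ∉ F := by
  have hPconv : Convex ℝ P := hP ▸ convex_convexHull ℝ _
  refine ⟨continuous_of_mem_frontier_of_eq_add_smul_sub hPconv hy (by fun_prop) hg,
    fun x₀ hx₀ ↦ ?_⟩
  obtain ⟨hfr, t, ht, hgx⟩ := hg x₀
  rw [hx₀] at hfr hgx
  exact hPconv.exists_isFaceOf_ne_of_eq_add_smul_sub hy x₀.2 hfr.2 ht hgx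

/-- Let `P` be a polytope, `y` an interior point of `P`, and `f : P → P` continuous
with `y` not in the image of `f`. If `g : P → ∂P` maps each `x` to the (unique) point
where the ray from `f(x)` through `y` meets the boundary of `P`, then `g` is
continuous, and every fixed point `x₀` of `g` lies in a proper face `F` of `P`
with `f(x₀) ∉ F`. -/
theorem ray_retraction_fixed_point (n : ℕ)
    (S : Finset (EuclideanSpace ℝ (Fin n)))
    (P : Set (EuclideanSpace ℝ (Fin n)))
    (hP : P = convexHull ℝ (S : Set (EuclideanSpace ℝ (Fin n))))
    (y : EuclideanSpace ℝ (Fin n)) (hy : y ∈ interior P)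
    (f : C(P, P))
    (hyf : ∀ x : P, (f x : EuclideanSpace ℝ (Fin n)) ≠ y)
    (g : P → EuclideanSpace ℝ (Fin n))
    (hg : ∀ x : P, g x ∈ frontier P ∧
      ∃ t : ℝ, 1 ≤ t ∧ g x = (f x : EuclideanSpace ℝ (Fin n)) +
        t • (y - (f x : EuclideanSpace ℝ (Fin n)))) :
    Continuous g ∧
      ∀ x₀ : P, g x₀ = (x₀ : EuclideanSpace ℝ (Fin n)) →
        ∃ F, IsFaceOf F P ∧ F ≠ P ∧ (x₀ : EuclideanSpace ℝ (Fin n)) ∈ F ∧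
          (f x₀ : EuclideanSpace ℝ (Fin n)) ∉ F :=
  ray_retraction_fixed_point_general n S P hP y hy f g hg
end SupportingFace
end

section
/- Let F ⊆ 2^E with |E| = m, and let c(F) be the decision-tree complexity of F. Then (1+t)^{m−c(F)} divides the generating polynomial p_F(t) = Σ_{A∈F} t^{|A|} in Z[t]. -/
/-- A binary decision tree: leaves hold answers, internal nodes query an element
(left subtree = answer NO, right subtree = answer YES). -/
inductive DTree (α : Type*) where
  | leaf : Bool → DTree α
  | node : α → DTree α → DTree α → DTree α

/-- Evaluate a decision tree on an input set (given by its characteristic function). -/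
def DTree.eval {α : Type*} : DTree α → (α → Bool) → Bool
  | .leaf b, _ => b
  | .node e t0 t1, A => if A e then t1.eval A else t0.eval A

/-- The depth (worst-case number of queries) of a decision tree. -/
def DTree.depth {α : Type*} : DTree α → ℕ
  | .leaf _ => 0
  | .node _ t0 t1 => max t0.depth t1.depth + 1

/-- The tree `T` decides membership in the set system `F`. -/
def Decides {α : Type*} [DecidableEq α] (F : Finset (Finset α)) (T : DTree α) : Prop :=
  ∀ A : Finset α, T.eval (fun e => decide (e ∈ A)) = decide (A ∈ F)

/-- The decision-tree (argument) complexity `c(F)` of a set system `F`. -/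
noncomputable def dtComplexity (α : Type*) [DecidableEq α] (F : Finset (Finset α)) : ℕ :=
  sInf {d | ∃ T : DTree α, Decides F T ∧ T.depth = d}

/-!
Fix a subcube `{B ∪ C : C ⊆ S}` with `S` free and `B` disjoint from it, and follow a decision tree
on it. A leaf accepts either nothing or the whole subcube, whose generating polynomial is
`(1 + t) ^ #S`. A query of a free element `e` splits the subcube into two halves of dimension
`#S - 1`, and the accepted part has generating polynomial `p₀ + t * p₁`; a query of a fixed element
just follows one branch. By induction on the tree, `(1 + t) ^ (#S - depth)` divides the accepted
part. Take `S = E`, `B = ∅` and a tree of depth `c(F)`.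
-/

open Polynomial Finset

namespace DTree

variable {α : Type*} [DecidableEq α] {R : Type*} [CommSemiring R]

variable (R) in
/-- The part of the subcube `[B, B ∪ S]` accepted by `T`, counted by the number of elements
beyond `B`. -/
noncomputable def acceptPoly (T : DTree α) (B S : Finset α) : R[X] :=
  ∑ C ∈ S.powerset, if T.eval (fun x => decide (x ∈ B ∪ C)) then X ^ #C else 0

theorem acceptPoly_leaf_true (B S : Finset α) : acceptPoly R (leaf true) B S = (1 + X) ^ #S := by
  rw [add_comm, ← sum_pow_mul_eq_add_pow]
  simp [acceptPoly, eval]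

theorem acceptPoly_leaf_false (B S : Finset α) : acceptPoly R (leaf false) B S = 0 := by
  simp [acceptPoly, eval]

theorem acceptPoly_node_insert {e : α} {B S : Finset α} (heS : e ∉ S) (heB : e ∉ B)
    (t₀ t₁ : DTree α) :
    acceptPoly R (node e t₀ t₁) B (insert e S) =
      acceptPoly R t₀ B S + X * acceptPoly R t₁ (insert e B) S := by
  rw [acceptPoly, sum_powerset_insert heS, acceptPoly, acceptPoly, mul_sum]
  congr 1 <;> refine sum_congr rfl fun C hC => ?_
  · have heC : e ∉ C := fun h => heS (mem_powerset.mp hC h)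
    simp [eval, heB, heC]
  · have heC : e ∉ C := fun h => heS (mem_powerset.mp hC h)
    rw [union_insert, ← insert_union, card_insert_of_notMem heC, pow_succ']
    simp [eval]

theorem acceptPoly_node_of_notMem {e : α} {B S : Finset α} (heS : e ∉ S) (t₀ t₁ : DTree α) :
    acceptPoly R (node e t₀ t₁) B S = acceptPoly R (if e ∈ B then t₁ else t₀) B S := by
  refine sum_congr rfl fun C hC => ?_
  have heC : e ∉ C := fun h => heS (mem_powerset.mp hC h)
  by_cases heB : e ∈ B <;> simp [eval, heB, heC]

theorem one_add_X_pow_sub_depth_dvd_acceptPoly (T : DTree α) {B S : Finset α}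
    (hSB : Disjoint S B) :
    (1 + X : R[X]) ^ (#S - T.depth) ∣ acceptPoly R T B S := by
  induction T generalizing B S with
  | leaf b => cases b <;> simp [acceptPoly_leaf_false, acceptPoly_leaf_true, depth]
  | node e t₀ t₁ ih₀ ih₁ =>
    by_cases heS : e ∈ S
    · have hS' : Disjoint (S.erase e) B := hSB.mono_left (erase_subset e S)
      have hdeg (t : DTree α) (ht : t.depth ≤ max t₀.depth t₁.depth) :
          #S - (node e t₀ t₁).depth ≤ #(S.erase e) - t.depth := by
        rw [depth, card_erase_of_mem heS]; omega
      rw [← insert_erase heS, acceptPoly_node_insert (notMem_erase e S) (disjoint_left.mp hSB heS),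
        insert_erase heS]
      exact dvd_add ((pow_dvd_pow _ (hdeg t₀ (le_max_left _ _))).trans (ih₀ hS'))
        (((pow_dvd_pow _ (hdeg t₁ (le_max_right _ _))).trans
          (ih₁ (disjoint_insert_right.mpr ⟨notMem_erase e S, hS'⟩))).mul_left X)
    · rw [acceptPoly_node_of_notMem heS]
      split_ifs
      · exact (pow_dvd_pow _ (by rw [depth]; omega)).trans (ih₁ hSB)
      · exact (pow_dvd_pow _ (by rw [depth]; omega)).trans (ih₀ hSB)

def queryAll (f : Finset α → Bool) : List α → Finset α → DTree α
  | [], B => leaf (f B)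
  | e :: l, B => node e (queryAll f l B) (queryAll f l (insert e B))

theorem eval_queryAll (f : Finset α → Bool) (l : List α) (B A : Finset α) :
    (queryAll f l B).eval (fun x => decide (x ∈ A)) = f (B ∪ {x ∈ A | x ∈ l}) := by
  induction l generalizing B with
  | nil => simp [queryAll, eval]
  | cons e l ih =>
    rw [queryAll, eval]
    split_ifs with heA <;> rw [ih] <;> congr 1 <;> ext x <;> by_cases x = e <;> simp_all

theorem exists_eval_eq [Fintype α] (f : Finset α → Bool) :
    ∃ T : DTree α, ∀ A : Finset α, T.eval (fun x => decide (x ∈ A)) = f A :=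
  ⟨queryAll f univ.toList ∅, fun A => by simp [eval_queryAll]⟩

end DTree

open DTree

theorem exists_decides_depth_eq_dtComplexity {α : Type*} [Fintype α] [DecidableEq α]
    (F : Finset (Finset α)) : ∃ T : DTree α, Decides F T ∧ T.depth = dtComplexity α F :=
  have ⟨T, hT⟩ := exists_eval_eq fun A => decide (A ∈ F)
  Nat.sInf_mem (s := {d | ∃ T : DTree α, Decides F T ∧ T.depth = d}) ⟨_, T, hT, rfl⟩

theorem acceptPoly_of_decides {α : Type*} [Fintype α] [DecidableEq α] {R : Type*}
    [CommSemiring R] {F : Finset (Finset α)} {T : DTree α} (hT : Decides F T) :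
    acceptPoly R T ∅ univ = ∑ A ∈ F, X ^ #A := by
  simp only [acceptPoly, empty_union, ← sum_filter]
  congr
  ext A
  simp [hT A]

/-- For a set system `F ⊆ 2^E` with `|E| = m` and decision-tree complexity `c(F)`,
the polynomial `(1+t)^{m-c(F)}` divides the generating polynomial
`p_F(t) = Σ_{A ∈ F} t^{|A|}` in `ℤ[t]`. -/
theorem one_add_X_pow_dvd_generating_poly (α : Type*) [Fintype α] [DecidableEq α]
    (F : Finset (Finset α)) :
    (1 + Polynomial.X : Polynomial ℤ) ^ (Fintype.card α - dtComplexity α F) ∣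
      ∑ A ∈ F, (Polynomial.X : Polynomial ℤ) ^ A.card := by
  obtain ⟨T, hT, hdepth⟩ := exists_decides_depth_eq_dtComplexity F
  rw [← acceptPoly_of_decides hT, ← hdepth, ← card_univ]
  exact one_add_X_pow_sub_depth_dvd_acceptPoly T (disjoint_empty_right _)
end
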